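/- For the complete graph K_n and a perturbation Δ > −1 of the weight of a single edge [i₀,j₀], the RP-1 distance between K_n and the perturbed graph is 4|Δ|/(n + 2Δ). -/

import Mathlib

open Matrix Finset

/-- `A` is a (weighted) adjacency matrix: symmetric, nonnegative, no self-loops. -/
def IsAdjMat {n : ℕ} (A : Matrix (Fin n) (Fin n) ℝ) : Prop :=
  A.IsSymm ∧ (∀ i j, 0 ≤ A i j) ∧ ∀ i, A i i = 0

/-- Combinatorial Laplacian `L = D - A`. -/
def lap {n : ℕ} (A : Matrix (Fin n) (Fin n) ℝ) : Matrix (Fin n) (Fin n) ℝ :=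
  Matrix.diagonal (fun i => ∑ j, A i j) - A

/-- Connectivity: the kernel of the Laplacian is spanned by the all-ones vector. -/
def IsConnectedLap {n : ℕ} (L : Matrix (Fin n) (Fin n) ℝ) : Prop :=
  ∀ v : Fin n → ℝ, L.mulVec v = 0 → ∃ c : ℝ, v = fun _ => c

/-- `Ld` is the Moore–Penrose pseudoinverse of `L`. -/
def IsMoorePenrose {n : ℕ} (L Ld : Matrix (Fin n) (Fin n) ℝ) : Prop :=
  L * Ld * L = L ∧ Ld * L * Ld = Ld ∧ (L * Ld)ᵀ = L * Ld ∧ (Ld * L)ᵀ = Ld * L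

/-- Effective resistance `R_ij = L†_ii + L†_jj - 2 L†_ij`. -/
def effR {n : ℕ} (Ld : Matrix (Fin n) (Fin n) ℝ) (i j : Fin n) : ℝ :=
  Ld i i + Ld j j - 2 * Ld i j

/-- Adjacency matrix of the unweighted complete graph `K_n`. -/
def completeAdj (n : ℕ) : Matrix (Fin n) (Fin n) ℝ :=
  Matrix.of fun i j => if i = j then 0 else 1

/-- Symmetric single-edge perturbation matrix: adds `Δ` to the weight of edge `[i₀, j₀]`. -/
def edgePert {n : ℕ} (i₀ j₀ : Fin n) (Δ : ℝ) : Matrix (Fin n) (Fin n) ℝ :=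
  Matrix.of fun i j => if (i = i₀ ∧ j = j₀) ∨ (i = j₀ ∧ j = i₀) then Δ else 0

/-- Adjacency matrix of the unweighted star graph `S_n` with hub the vertex of index 0. -/
def starAdj (n : ℕ) : Matrix (Fin n) (Fin n) ℝ :=
  Matrix.of fun i j => if i ≠ j ∧ (i.val = 0 ∨ j.val = 0) then 1 else 0

/-- Adjacency matrix of the unweighted path graph `P_n` on vertices `0, …, n-1`. -/
def pathAdj (n : ℕ) : Matrix (Fin n) (Fin n) ℝ :=
  Matrix.of fun i j => if i.val + 1 = j.val ∨ j.val + 1 = i.val then 1 else 0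

/-- Adjacency matrix of the unweighted cycle graph `C_n`. -/
def cycleAdj (n : ℕ) : Matrix (Fin n) (Fin n) ℝ :=
  Matrix.of fun i j => if (i.val + 1) % n = j.val ∨ (j.val + 1) % n = i.val then 1 else 0

/-!
With `J = 𝟙𝟙ᵀ` and `b = e_{i₀} - e_{j₀}`, the two Laplacians are `n • 1 - J` and
`n • 1 - J + Δ • bbᵀ`. Because `𝟙 ⊥ b`, the rank-one terms decouple, and the Penrose
equations (which determine the pseudoinverse uniquely) are checked directly for
`n⁻¹ • 1 - n⁻² • J` and for the same matrix minus `Δ / (n (n + 2Δ)) • bbᵀ`.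
Hence every effective resistance drops by `Δ / (n (n + 2Δ)) * (b i - b j)²`, and
`∑ i, ∑ j, (b i - b j)² = 4n`.
-/

theorem IsMoorePenrose.unique {n : ℕ} {L M₁ M₂ : Matrix (Fin n) (Fin n) ℝ}
    (h₁ : IsMoorePenrose L M₁) (h₂ : IsMoorePenrose L M₂) : M₁ = M₂ := by
  obtain ⟨hLML₁, hMLM₁, hLM₁, hML₁⟩ := h₁
  obtain ⟨hLML₂, hMLM₂, hLM₂, hML₂⟩ := h₂
  have hL : L * M₁ = L * M₂ := calc
    L * M₁ = (L * M₂ * L * M₁)ᵀ := by rw [hLML₂, hLM₁]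
    _ = (L * M₁)ᵀ * (L * M₂)ᵀ := by simp only [transpose_mul, Matrix.mul_assoc]
    _ = L * M₂ := by rw [hLM₁, hLM₂, ← Matrix.mul_assoc, hLML₁]
  have hR : M₁ * L = M₂ * L := calc
    M₁ * L = (M₁ * L * M₂ * L)ᵀ := by
      rw [Matrix.mul_assoc M₁, Matrix.mul_assoc M₁, hLML₂, hML₁]
    _ = (M₂ * L)ᵀ * (M₁ * L)ᵀ := by simp only [transpose_mul, Matrix.mul_assoc]
    _ = M₂ * L := by rw [hML₁, hML₂, Matrix.mul_assoc, ← Matrix.mul_assoc L, hLML₁]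
  calc M₁ = M₂ * L * M₁ := by rw [← hR, hMLM₁]
    _ = M₂ := by rw [Matrix.mul_assoc, hL, ← Matrix.mul_assoc, hMLM₂]

theorem isMoorePenrose_rankOne_update {n : ℕ} {u v : Fin n → ℝ} {N s Δ : ℝ}
    (hN : N ≠ 0) (hNΔ : N + s * Δ ≠ 0)
    (huu : u ⬝ᵥ u = N) (huv : u ⬝ᵥ v = 0) (hvv : v ⬝ᵥ v = s) :
    IsMoorePenrose (N • 1 - vecMulVec u u + Δ • vecMulVec v v)
      (N⁻¹ • 1 - (N ^ 2)⁻¹ • vecMulVec u u - (Δ / (N * (N + s * Δ))) • vecMulVec v v) := by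
  set U := vecMulVec u u
  set V := vecMulVec v v
  set L := N • 1 - U + Δ • V
  set M := N⁻¹ • 1 - (N ^ 2)⁻¹ • U - (Δ / (N * (N + s * Δ))) • V
  set P := (1 : Matrix (Fin n) (Fin n) ℝ) - N⁻¹ • U
  have hUU : U * U = N • U := by rw [vecMulVec_mul_vecMulVec, huu, vecMulVec_smul]
  have hUV : U * V = 0 := by rw [vecMulVec_mul_vecMulVec, huv, zero_smul, vecMulVec_zero]
  have hVU : V * U = 0 := by
    rw [vecMulVec_mul_vecMulVec, dotProduct_comm, huv, zero_smul, vecMulVec_zero]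
  have hVV : V * V = s • V := by rw [vecMulVec_mul_vecMulVec, hvv, vecMulVec_smul]
  have hLM : L * M = P := by
    have hNΔ' : N + Δ * s ≠ 0 := by rwa [mul_comm]
    simp only [L, M, P, Matrix.add_mul, Matrix.sub_mul, Matrix.mul_sub,
      Matrix.smul_mul, Matrix.mul_smul, hUU, hUV, hVU, hVV, Matrix.mul_one, Matrix.one_mul,
      smul_smul, smul_zero, sub_zero]
    match_scalars <;> field_simp <;> ring
  have hML : M * L = P := by
    simpa [L, M, P, U, V, transpose_sub, transpose_add] using congrArg transpose hLM
  have hUL : U * L = 0 := by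
    simp only [L, Matrix.mul_add, Matrix.mul_sub, Matrix.mul_smul, hUU, hUV, Matrix.mul_one,
      smul_zero, sub_self, add_zero]
  have hUM : U * M = 0 := by
    simp only [M, Matrix.mul_sub, Matrix.mul_smul, hUU, hUV, Matrix.mul_one, smul_zero,
      smul_smul, sub_zero]
    match_scalars
    field_simp
    ring
  have hPT : Pᵀ = P := by simp [P, U, transpose_sub]
  refine ⟨?_, ?_, ?_, ?_⟩
  · rw [hLM, Matrix.sub_mul, Matrix.one_mul, Matrix.smul_mul, hUL, smul_zero, sub_zero]
  · rw [hML, Matrix.sub_mul, Matrix.one_mul, Matrix.smul_mul, hUM, smul_zero, sub_zero]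
  · rw [hLM, hPT]
  · rw [hML, hPT]

theorem lap_add {n : ℕ} (A B : Matrix (Fin n) (Fin n) ℝ) : lap (A + B) = lap A + lap B := by
  simp only [lap, Matrix.add_apply, sum_add_distrib, ← diagonal_add]
  abel

theorem lap_completeAdj (n : ℕ) : lap (completeAdj n) = (n : ℝ) • 1 - vecMulVec 1 1 := by
  have hK : completeAdj n = vecMulVec 1 1 - 1 := by
    ext i j
    by_cases h : i = j <;> simp [completeAdj, h]
  ext i j
  by_cases h : i = j <;> simp [lap, hK, sum_sub_distrib, Matrix.one_apply, h]

theorem lap_edgePert {n : ℕ} {i₀ j₀ : Fin n} (h : i₀ ≠ j₀) (Δ : ℝ) :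
    lap (edgePert i₀ j₀ Δ) =
      Δ • vecMulVec (Pi.single i₀ 1 - Pi.single j₀ 1) (Pi.single i₀ 1 - Pi.single j₀ 1) := by
  ext i j
  by_cases hij : i = j
  · subst hij
    by_cases h₁ : i = i₀ <;> by_cases h₂ : i = j₀ <;>
      simp_all [lap, edgePert, vecMulVec_apply]
  · by_cases h₁ : i = i₀ <;> by_cases h₂ : i = j₀ <;> by_cases h₃ : j = i₀ <;>
      by_cases h₄ : j = j₀ <;> simp_all [lap, edgePert, vecMulVec_apply]

theorem effR_sub_smul_vecMulVec {n : ℕ} (A : Matrix (Fin n) (Fin n) ℝ) (c : ℝ) (v : Fin n → ℝ)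
    (i j : Fin n) : effR (A - c • vecMulVec v v) i j = effR A i j - c * (v i - v j) ^ 2 := by
  simp only [effR, Matrix.sub_apply, Matrix.smul_apply, vecMulVec_apply, smul_eq_mul]
  ring

theorem sum_sum_sub_sq {ι : Type*} [Fintype ι] (v : ι → ℝ) :
    ∑ i, ∑ j, (v i - v j) ^ 2 = 2 * (Fintype.card ι * ∑ i, v i ^ 2 - (∑ i, v i) ^ 2) := by
  simp only [sub_sq, sum_add_distrib, sum_sub_distrib, sum_const, card_univ, nsmul_eq_mul,
    mul_assoc, ← mul_sum, ← sum_mul]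
  ring

theorem sum_single_sub_single {n : ℕ} (i₀ j₀ : Fin n) :
    ∑ i, (Pi.single i₀ 1 - Pi.single j₀ 1 : Fin n → ℝ) i = 0 := by
  simp [sum_sub_distrib]

theorem sum_single_sub_single_sq {n : ℕ} {i₀ j₀ : Fin n} (h : i₀ ≠ j₀) :
    ∑ i, (Pi.single i₀ 1 - Pi.single j₀ 1 : Fin n → ℝ) i ^ 2 = 2 := by
  simp [sub_sq, sum_add_distrib, sum_sub_distrib, Pi.single_apply, h.symm]
  norm_num

theorem rp1_complete_graph_general (n : ℕ)
    (i₀ j₀ : Fin n) (hne : i₀ ≠ j₀) (Δ : ℝ) (hΔ : -1 < Δ)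
    (Ld₁ Ld₂ : Matrix (Fin n) (Fin n) ℝ)
    (hMP₁ : IsMoorePenrose (lap (completeAdj n)) Ld₁)
    (hMP₂ : IsMoorePenrose (lap (completeAdj n + edgePert i₀ j₀ Δ)) Ld₂) :
    ∑ i, ∑ j, |effR Ld₁ i j - effR Ld₂ i j| = 4 * |Δ| / (n + 2 * Δ) := by
  set e : Fin n → ℝ := Pi.single i₀ 1 - Pi.single j₀ 1
  have hn : (2 : ℝ) ≤ n := by
    exact_mod_cast (Fintype.card_fin n ▸ Fintype.one_lt_card_iff.2 ⟨i₀, j₀, hne⟩ : 1 < n)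
  have hN : (n : ℝ) ≠ 0 := by positivity
  have hden : 0 < (n : ℝ) + 2 * Δ := by linarith
  have h11 : (1 : Fin n → ℝ) ⬝ᵥ 1 = n := by simp
  have h1e : 1 ⬝ᵥ e = 0 := by rw [one_dotProduct, sum_single_sub_single]
  have hee : e ⬝ᵥ e = 2 := by
    simpa only [dotProduct, sq] using sum_single_sub_single_sq hne
  have hLd₁ : Ld₁ = (n : ℝ)⁻¹ • 1 - ((n : ℝ) ^ 2)⁻¹ • vecMulVec 1 1 := by
    refine hMP₁.unique ?_
    simpa [lap_completeAdj] using
      isMoorePenrose_rankOne_update (Δ := 0) hN (by simpa using hN) h11 h1e hee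
  set c := Δ / (n * (n + 2 * Δ))
  have hLd₂ : Ld₂ = Ld₁ - c • vecMulVec e e := by
    refine hMP₂.unique ?_
    rw [hLd₁, lap_add, lap_completeAdj, lap_edgePert hne]
    exact isMoorePenrose_rankOne_update hN hden.ne' h11 h1e hee
  calc ∑ i, ∑ j, |effR Ld₁ i j - effR Ld₂ i j| = |c| * ∑ i, ∑ j, (e i - e j) ^ 2 := by
        simp only [hLd₂, effR_sub_smul_vecMulVec, sub_sub_cancel, abs_mul, abs_sq, mul_sum]
    _ = |c| * (4 * n) := by
        rw [sum_sum_sub_sq, sum_single_sub_single, sum_single_sub_single_sq hne,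
          Fintype.card_fin]
        ring
    _ = 4 * |Δ| / (n + 2 * Δ) := by
        rw [abs_div, abs_of_pos (by positivity : (0 : ℝ) < n * (n + 2 * Δ))]
        field_simp

/-- For the complete graph `K_n` and a perturbation `Δ > -1` of the weight of the single
edge `[i₀, j₀]`, the RP-1 distance between `K_n` and the perturbed graph is
`4|Δ|/(n + 2Δ)`. -/
theorem rp1_complete_graph (n : ℕ) (hn : 3 ≤ n)
    (i₀ j₀ : Fin n) (hne : i₀ ≠ j₀) (Δ : ℝ) (hΔ : -1 < Δ)
    (Ld₁ Ld₂ : Matrix (Fin n) (Fin n) ℝ)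
    (hMP₁ : IsMoorePenrose (lap (completeAdj n)) Ld₁)
    (hMP₂ : IsMoorePenrose (lap (completeAdj n + edgePert i₀ j₀ Δ)) Ld₂) :
    ∑ i, ∑ j, |effR Ld₁ i j - effR Ld₂ i j| = 4 * |Δ| / (n + 2 * Δ) :=
  rp1_complete_graph_general n i₀ j₀ hne Δ hΔ Ld₁ Ld₂ hMP₁ hMP₂
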